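/- Let I ⊆ ℝ be an open interval and f, g : I → ℝ smooth with f > 0, g > 0 and g' > 0 on I. Let l₁ ∈ ℝ, l₂ ≠ 0, l₃ ≠ 0, and define T(t,x) = t + l₁·g(x)², X̃(t,x) = 2l₂·g(x), Ũ(t,x,u) = l₃·u·√(f(x)·g'(x)³/g(x)) on ℝ × I × ℝ. Then at every point: X₁(T) = 1, X₁(X̃) = 0, X₁(Ũ) = 0; X₂(T) = 0, X₂(X̃) = 0, X₂(Ũ) = Ũ; X₃(T) = 4T, X₃(X̃) = 2X̃, X₃(Ũ) = −Ũ. Hence the change of variables maps X₁, X₂, X₃ to ∂_T, U∂_U, 4T∂_T + 2X∂_X − U∂_U respectively. -/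

import Mathlib

/-- The operator `X₁F = ∂F/∂t`. -/
noncomputable def X1 (F : ℝ → ℝ → ℝ → ℝ) (t x u : ℝ) : ℝ :=
  deriv (fun s => F s x u) t

/-- The operator `X₂F = u·∂F/∂u`. -/
noncomputable def X2 (F : ℝ → ℝ → ℝ → ℝ) (t x u : ℝ) : ℝ :=
  u * deriv (fun v => F t x v) u

/-- The operator `X₃F = 4t·F_t + (2g/g')·F_x − (f'g/(fg') + 3g·g''/g'²)·u·F_u`. -/
noncomputable def X3 (f g : ℝ → ℝ) (F : ℝ → ℝ → ℝ → ℝ) (t x u : ℝ) : ℝ :=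
  4 * t * deriv (fun s => F s x u) t
    + (2 * g x / deriv g x) * deriv (fun y => F t y u) x
    - (deriv f x * g x / (f x * deriv g x)
        + 3 * g x * (deriv^[2] g x) / (deriv g x)^2) * u * deriv (fun v => F t x v) u

/-- The operator `X₄F = (2/g')·F_x − (f'/(fg') + 3g''/g'²)·u·F_u`. -/
noncomputable def X4 (f g : ℝ → ℝ) (F : ℝ → ℝ → ℝ → ℝ) (t x u : ℝ) : ℝ :=
  (2 / deriv g x) * deriv (fun y => F t y u) x
    - (deriv f x / (f x * deriv g x)
        + 3 * (deriv^[2] g x) / (deriv g x)^2) * u * deriv (fun v => F t x v) u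

/-! Apart from the factor `√ψ` of `Ũ`, where `ψ = f·g'³/g`, the new coordinates depend on `x`
only through `g`, and `X₃` gives `g` the weight `2` since `(2g/g')·g' = 2g`. The logarithmic
derivative `ψ'/ψ = f'/f + 3g''/g' - g'/g` shows that the `x`-part of `X₃` multiplies `√ψ` by
`f'g/(fg') + 3gg''/g'² - 1`, which cancels against the `u`-part of `X₃` up to the weight `-1`. -/

def newTime (g : ℝ → ℝ) (l₁ : ℝ) : ℝ → ℝ → ℝ → ℝ := fun t x _ => t + l₁ * g x ^ 2

def newSpace (g : ℝ → ℝ) (l₂ : ℝ) : ℝ → ℝ → ℝ → ℝ := fun _ x _ => 2 * l₂ * g x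

noncomputable def newField (f g : ℝ → ℝ) (l₃ : ℝ) : ℝ → ℝ → ℝ → ℝ :=
  fun _ x u => l₃ * u * √(f x * deriv g x ^ 3 / g x)

section Operators

variable {f g : ℝ → ℝ} {F : ℝ → ℝ → ℝ → ℝ} {t x u Ft Fx Fu : ℝ}

theorem X1_eq_of_hasDerivAt (hFt : HasDerivAt (fun s => F s x u) Ft t) : X1 F t x u = Ft :=
  hFt.deriv

theorem X2_eq_of_hasDerivAt (hFu : HasDerivAt (fun v => F t x v) Fu u) :
    X2 F t x u = u * Fu := by
  rw [X2, hFu.deriv]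

theorem X3_eq_of_hasDerivAt (hFt : HasDerivAt (fun s => F s x u) Ft t)
    (hFx : HasDerivAt (fun y => F t y u) Fx x) (hFu : HasDerivAt (fun v => F t x v) Fu u) :
    X3 f g F t x u = 4 * t * Ft + 2 * g x / deriv g x * Fx
      - (deriv f x * g x / (f x * deriv g x)
          + 3 * g x * deriv (deriv g) x / deriv g x ^ 2) * u * Fu := by
  rw [X3, hFt.deriv, hFx.deriv, hFu.deriv]
  rfl

end Operators

theorem HasDerivAt.sqrt_mul_pow_three_div {a b c : ℝ → ℝ} {a' b' c' x : ℝ}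
    (ha : HasDerivAt a a' x) (hb : HasDerivAt b b' x) (hc : HasDerivAt c c' x)
    (ha₀ : 0 < a x) (hb₀ : 0 < b x) (hc₀ : 0 < c x) :
    HasDerivAt (fun y => √(a y * c y ^ 3 / b y))
      (√(a x * c x ^ 3 / b x) * (a' / a x + 3 * c' / c x - b' / b x) / 2) x := by
  have hψ : 0 < a x * c x ^ 3 / b x := by positivity
  have hsqrt : √(a x * c x ^ 3 / b x) ^ 2 = a x * c x ^ 3 / b x := Real.sq_sqrt hψ.le
  have hsqrt₀ : 0 < √(a x * c x ^ 3 / b x) := Real.sqrt_pos.mpr hψ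
  have hψ' : HasDerivAt (fun y => a y * c y ^ 3 / b y)
      (((a' * c x ^ 3 + a x * (3 * c x ^ 2 * c')) * b x - a x * c x ^ 3 * b') / b x ^ 2) x := by
    simpa using (ha.mul (hc.pow 3)).fun_div hb hb₀.ne'
  refine (hψ'.sqrt hψ.ne').congr_deriv ?_
  generalize √(a x * c x ^ 3 / b x) = s at hsqrt hsqrt₀ ⊢
  rw [eq_div_iff hb₀.ne'] at hsqrt
  field_simp
  linear_combination -((a' * c x + a x * 3 * c') * b x - c x * a x * b') * hsqrt

section Coordinates

variable {f g : ℝ → ℝ} {t x u : ℝ}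

theorem newTime_weights (l₁ : ℝ) (hg : DifferentiableAt ℝ g x) (hg' : deriv g x ≠ 0) :
    X1 (newTime g l₁) t x u = 1 ∧ X2 (newTime g l₁) t x u = 0 ∧
      X3 f g (newTime g l₁) t x u = 4 * newTime g l₁ t x u := by
  have hFt : HasDerivAt (fun s => newTime g l₁ s x u) 1 t := (hasDerivAt_id t).add_const _
  have hFx : HasDerivAt (fun y => newTime g l₁ t y u) (l₁ * (2 * g x * deriv g x)) x := by
    simpa [newTime] using ((hg.hasDerivAt.pow 2).const_mul l₁).const_add t
  have hFu : HasDerivAt (fun v => newTime g l₁ t x v) 0 u := hasDerivAt_const u _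
  refine ⟨X1_eq_of_hasDerivAt hFt, by simp [X2_eq_of_hasDerivAt hFu], ?_⟩
  rw [X3_eq_of_hasDerivAt hFt hFx hFu, newTime]
  field_simp
  ring

theorem newSpace_weights (l₂ : ℝ) (hg : DifferentiableAt ℝ g x) (hg' : deriv g x ≠ 0) :
    X1 (newSpace g l₂) t x u = 0 ∧ X2 (newSpace g l₂) t x u = 0 ∧
      X3 f g (newSpace g l₂) t x u = 2 * newSpace g l₂ t x u := by
  have hFt : HasDerivAt (fun s => newSpace g l₂ s x u) 0 t := hasDerivAt_const t _
  have hFx : HasDerivAt (fun y => newSpace g l₂ t y u) (2 * l₂ * deriv g x) x :=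
    hg.hasDerivAt.const_mul _
  have hFu : HasDerivAt (fun v => newSpace g l₂ t x v) 0 u := hasDerivAt_const u _
  refine ⟨X1_eq_of_hasDerivAt hFt, by simp [X2_eq_of_hasDerivAt hFu], ?_⟩
  rw [X3_eq_of_hasDerivAt hFt hFx hFu, newSpace]
  field_simp
  ring

theorem newField_weights (l₃ : ℝ) (hf : DifferentiableAt ℝ f x) (hg : DifferentiableAt ℝ g x)
    (hg'' : DifferentiableAt ℝ (deriv g) x) (hf₀ : 0 < f x) (hg₀ : 0 < g x)
    (hg' : 0 < deriv g x) :
    X1 (newField f g l₃) t x u = 0 ∧ X2 (newField f g l₃) t x u = newField f g l₃ t x u ∧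
      X3 f g (newField f g l₃) t x u = -newField f g l₃ t x u := by
  have hFt : HasDerivAt (fun s => newField f g l₃ s x u) 0 t := hasDerivAt_const t _
  have hFx := (hf.hasDerivAt.sqrt_mul_pow_three_div hg.hasDerivAt hg''.hasDerivAt
    hf₀ hg₀ hg').const_mul (l₃ * u)
  have hFu := ((hasDerivAt_id u).const_mul l₃).mul_const √(f x * deriv g x ^ 3 / g x)
  refine ⟨X1_eq_of_hasDerivAt hFt, ?_, ?_⟩
  · rw [X2_eq_of_hasDerivAt hFu, newField]
    ring
  · rw [X3_eq_of_hasDerivAt hFt hFx hFu, newField]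
    field_simp
    ring

end Coordinates

theorem statement2_general
    (I : Set ℝ) (hIopen : IsOpen I)
    (f g : ℝ → ℝ)
    (hf : ContDiffOn ℝ (⊤ : ℕ∞) f I) (hg : ContDiffOn ℝ (⊤ : ℕ∞) g I)
    (hfpos : ∀ x ∈ I, 0 < f x) (hgpos : ∀ x ∈ I, 0 < g x)
    (hg' : ∀ x ∈ I, 0 < deriv g x)
    (l₁ l₂ l₃ : ℝ)
    (T Xt Ut : ℝ → ℝ → ℝ → ℝ)
    (hT : T = fun t x _ => t + l₁ * (g x)^2)
    (hXt : Xt = fun _ x _ => 2 * l₂ * g x)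
    (hUt : Ut = fun _ x u => l₃ * u * Real.sqrt (f x * (deriv g x)^3 / g x)) :
    ∀ t : ℝ, ∀ x ∈ I, ∀ u : ℝ,
      X1 T t x u = 1 ∧ X1 Xt t x u = 0 ∧ X1 Ut t x u = 0 ∧
      X2 T t x u = 0 ∧ X2 Xt t x u = 0 ∧ X2 Ut t x u = Ut t x u ∧
      X3 f g T t x u = 4 * T t x u ∧
      X3 f g Xt t x u = 2 * Xt t x u ∧
      X3 f g Ut t x u = -Ut t x u := by
  intro t x hx u
  have hfx : ContDiffAt ℝ (⊤ : ℕ∞) f x := hf.contDiffAt (hIopen.mem_nhds hx)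
  have hgx : ContDiffAt ℝ (⊤ : ℕ∞) g x := hg.contDiffAt (hIopen.mem_nhds hx)
  have hf₁ : DifferentiableAt ℝ f x := hfx.differentiableAt (by simp)
  have hg₁ : DifferentiableAt ℝ g x := hgx.differentiableAt (by simp)
  have hg₂ : DifferentiableAt ℝ (deriv g) x :=
    (hgx.derivWithin (m := 1) (WithTop.coe_le_coe.mpr le_top)).differentiableAt one_ne_zero
  obtain ⟨hT₁, hT₂, hT₃⟩ := newTime_weights (t := t) (u := u) (f := f) l₁ hg₁ (hg' x hx).ne'
  obtain ⟨hX₁, hX₂, hX₃⟩ := newSpace_weights (t := t) (u := u) (f := f) l₂ hg₁ (hg' x hx).ne'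
  obtain ⟨hU₁, hU₂, hU₃⟩ := newField_weights (t := t) (u := u) l₃ hf₁ hg₁ hg₂
    (hfpos x hx) (hgpos x hx) (hg' x hx)
  subst hT hXt hUt
  exact ⟨hT₁, hX₁, hU₁, hT₂, hX₂, hU₂, hT₃, hX₃, hU₃⟩

/-- the change of variables `T = t + l₁·g²`, `X̃ = 2l₂·g`,
`Ũ = l₃·u·√(f·g'³/g)` maps `X₁, X₂, X₃` to `∂_T, U∂_U, 4T∂_T + 2X∂_X − U∂_U`
respectively. -/
theorem statement2
    (I : Set ℝ) (hIopen : IsOpen I) (hIinterval : I.OrdConnected)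
    (f g : ℝ → ℝ)
    (hf : ContDiffOn ℝ (⊤ : ℕ∞) f I) (hg : ContDiffOn ℝ (⊤ : ℕ∞) g I)
    (hfpos : ∀ x ∈ I, 0 < f x) (hgpos : ∀ x ∈ I, 0 < g x)
    (hg' : ∀ x ∈ I, 0 < deriv g x)
    (l₁ l₂ l₃ : ℝ) (hl₂ : l₂ ≠ 0) (hl₃ : l₃ ≠ 0)
    (T Xt Ut : ℝ → ℝ → ℝ → ℝ)
    (hT : T = fun t x _ => t + l₁ * (g x)^2)
    (hXt : Xt = fun _ x _ => 2 * l₂ * g x)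
    (hUt : Ut = fun _ x u => l₃ * u * Real.sqrt (f x * (deriv g x)^3 / g x)) :
    ∀ t : ℝ, ∀ x ∈ I, ∀ u : ℝ,
      X1 T t x u = 1 ∧ X1 Xt t x u = 0 ∧ X1 Ut t x u = 0 ∧
      X2 T t x u = 0 ∧ X2 Xt t x u = 0 ∧ X2 Ut t x u = Ut t x u ∧
      X3 f g T t x u = 4 * T t x u ∧
      X3 f g Xt t x u = 2 * Xt t x u ∧
      X3 f g Ut t x u = -Ut t x u :=
  statement2_general I hIopen f g hf hg hfpos hgpos hg' l₁ l₂ l₃ T Xt Ut hT hXt hUt
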